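/- arXiv:1905.00777 — 3 statements merged into one kernel-verified Lean document; each statement's English description precedes it below -/
import Mathlib

section
/- Let a₂ > a₃ > 0 and γ > 0, and set A = √(a₂/2)·√γ and B = √(a₃/2)·√γ. Let W be a real Gaussian random variable with mean 0 and variance 1/2. Then (1/2)·[ ℙ( W < −(2A+B) ) + ℙ( −(2A−B) ≤ W < −(A−B) ) ] = (1/2)·[ Q(√(ζ₁ γ)) − Q(√(ζ₄ γ)) + Q(√(ζ₅ γ)) ], where ζ₁ = (√a₂ − √a₃)², ζ₄ = (2√a₂ − √a₃)², and ζ₅ = (2√a₂ + √a₃)². (Conditional bit error probability of user U₃ given that the symbols of U₂ are detected erroneously and subtracted in the SIC stage, Proposition 3, Eq. (26).) -/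
/-! Standardising `W ~ 𝒩(0, 1/2)` gives `ℙ(W < c) = Q(-√2 c)`, and the interval event is the
difference of two such half-line events. Since `√2 A = √(a₂γ)` and `√2 B = √(a₃γ)`, the three
thresholds `-(A - B)`, `-(2A - B)`, `-(2A + B)` become `√(ζ₁γ)`, `√(ζ₄γ)`, `√(ζ₅γ)`. -/

open MeasureTheory ProbabilityTheory Real

/-- The Gaussian Q-function: `Q x = (1/√(2π)) ∫_x^∞ e^{-t²/2} dt`. -/
noncomputable def gaussQ (x : ℝ) : ℝ :=
  (Real.sqrt (2 * Real.pi))⁻¹ * ∫ t in Set.Ioi x, Real.exp (-t ^ 2 / 2)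

open Set

theorem gaussQ_eq_gaussianReal_Ioi (x : ℝ) : gaussQ x = (gaussianReal 0 1).real (Ioi x) := by
  rw [measureReal_def, gaussianReal_apply_eq_integral 0 one_ne_zero, ENNReal.toReal_ofReal
      (setIntegral_nonneg measurableSet_Ioi fun t _ ↦ gaussianPDFReal_nonneg 0 1 t),
    gaussQ, ← integral_const_mul]
  simp [gaussianPDFReal]

theorem gaussianReal_map_neg_sqrt_mul_add (m : ℝ) (v : NNReal) :
    (gaussianReal 0 1).map (fun y ↦ -√(v : ℝ) * y + m) = gaussianReal m v := by
  change (gaussianReal 0 1).map ((· + m) ∘ (-√(v : ℝ) * ·)) = _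
  rw [← Measure.map_map (by fun_prop) (by fun_prop), gaussianReal_map_const_mul,
    gaussianReal_map_add_const]
  congr 1
  · simp
  · ext; simp

theorem gaussianReal_real_Iio (m : ℝ) {v : NNReal} (hv : v ≠ 0) (x : ℝ) :
    (gaussianReal m v).real (Iio x) = gaussQ ((m - x) / √(v : ℝ)) := by
  have hpos : 0 < √(v : ℝ) := Real.sqrt_pos.2 (by positivity)
  rw [← gaussianReal_map_neg_sqrt_mul_add, map_measureReal_apply (by fun_prop) measurableSet_Iio,
    gaussQ_eq_gaussianReal_Ioi]
  congr 1
  ext y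
  simp only [mem_preimage, mem_Iio, mem_Ioi, div_lt_iff₀ hpos]
  constructor <;> intro h <;> linarith

theorem measureReal_Ico_eq_sub {ν : Measure ℝ} [IsFiniteMeasure ν] {a b : ℝ} (hab : a ≤ b) :
    ν.real (Ico a b) = ν.real (Iio b) - ν.real (Iio a) := by
  rw [← Iio_sdiff_Iio, measureReal_sdiff (Iio_subset_Iio hab) measurableSet_Iio]

theorem gaussianReal_half_real_Iio (c : ℝ) :
    (gaussianReal 0 (1 / 2)).real (Iio c) = gaussQ (√2 * -c) := by
  rw [gaussianReal_real_Iio 0 (by norm_num)]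
  congr 1
  simp [div_eq_mul_inv, mul_comm]

theorem sqrt_two_mul_sqrt_div_two (a : ℝ) : √2 * √(a / 2) = √a := by
  rw [← Real.sqrt_mul zero_le_two, mul_div_cancel₀ a two_ne_zero]

theorem stmt3_general {Ω : Type*} [MeasurableSpace Ω] (μ : Measure Ω)
    (a₂ a₃ γ : ℝ) (ha : a₂ > a₃)
    (A B : ℝ) (hA : A = Real.sqrt (a₂ / 2) * Real.sqrt γ)
    (hB : B = Real.sqrt (a₃ / 2) * Real.sqrt γ)
    (W : Ω → ℝ) (hW : μ.map W = gaussianReal 0 (1 / 2))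
    (ζ₁ ζ₄ ζ₅ : ℝ)
    (hζ₁ : ζ₁ = (Real.sqrt a₂ - Real.sqrt a₃) ^ 2)
    (hζ₄ : ζ₄ = (2 * Real.sqrt a₂ - Real.sqrt a₃) ^ 2)
    (hζ₅ : ζ₅ = (2 * Real.sqrt a₂ + Real.sqrt a₃) ^ 2) :
    1 / 2 * ((μ {ω | W ω < -(2 * A + B)}).toReal
        + (μ {ω | -(2 * A - B) ≤ W ω ∧ W ω < -(A - B)}).toReal)
      = 1 / 2 * (gaussQ (Real.sqrt (ζ₁ * γ)) - gaussQ (Real.sqrt (ζ₄ * γ))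
          + gaussQ (Real.sqrt (ζ₅ * γ))) := by
  have hlaw : HasLaw W (gaussianReal 0 (1 / 2)) μ :=
    ⟨.of_map_ne_zero (hW ▸ IsProbabilityMeasure.ne_zero _), hW⟩
  have hA' : √2 * A = √a₂ * √γ := by rw [hA, ← mul_assoc, sqrt_two_mul_sqrt_div_two]
  have hB' : √2 * B = √a₃ * √γ := by rw [hB, ← mul_assoc, sqrt_two_mul_sqrt_div_two]
  have hsqrt : √a₃ ≤ √a₂ := Real.sqrt_le_sqrt ha.le
  have hζ₁γ : √(ζ₁ * γ) = √2 * (A - B) := by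
    rw [hζ₁, Real.sqrt_mul (sq_nonneg _), Real.sqrt_sq (by linarith)]
    linear_combination hB' - hA'
  have hζ₄γ : √(ζ₄ * γ) = √2 * (2 * A - B) := by
    rw [hζ₄, Real.sqrt_mul (sq_nonneg _), Real.sqrt_sq (by linarith [Real.sqrt_nonneg a₂])]
    linear_combination hB' - 2 * hA'
  have hζ₅γ : √(ζ₅ * γ) = √2 * (2 * A + B) := by
    rw [hζ₅, Real.sqrt_mul (sq_nonneg _), Real.sqrt_sq (by positivity)]
    linear_combination -hB' - 2 * hA'
  have hlt (c : ℝ) : μ.real {ω | W ω < c} = gaussQ (√2 * -c) :=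
    (hlaw.measureReal_eq measurableSet_Iio).trans (gaussianReal_half_real_Iio c)
  have hIco : μ.real {ω | -(2 * A - B) ≤ W ω ∧ W ω < -(A - B)}
      = gaussQ (√2 * -(-(A - B))) - gaussQ (√2 * -(-(2 * A - B))) := by
    have hA_nonneg : 0 ≤ A := hA ▸ by positivity
    rw [hlaw.measureReal_eq measurableSet_Ico, Ico_def, measureReal_Ico_eq_sub (by linarith),
      gaussianReal_half_real_Iio, gaussianReal_half_real_Iio]
  rw [← measureReal_def, ← measureReal_def, hlt, hIco, hζ₁γ, hζ₄γ, hζ₅γ]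
  simp only [neg_neg]
  ring

/-- Proposition 3 (Eq. (26)): conditional bit error probability of user U₃ given that the
symbols of U₂ were detected erroneously and subtracted in the SIC stage. With
`A = √(a₂/2)√γ`, `B = √(a₃/2)√γ` and `W` Gaussian of mean 0 and variance 1/2,
`(1/2)[ℙ(W < −(2A+B)) + ℙ(−(2A−B) ≤ W < −(A−B))]
  = (1/2)[Q(√(ζ₁γ)) − Q(√(ζ₄γ)) + Q(√(ζ₅γ))]`,
with `ζ₁ = (√a₂ − √a₃)²`, `ζ₄ = (2√a₂ − √a₃)²`, `ζ₅ = (2√a₂ + √a₃)²`. -/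
theorem stmt3 {Ω : Type*} [MeasurableSpace Ω] (μ : Measure Ω) [IsProbabilityMeasure μ]
    (a₂ a₃ γ : ℝ) (ha : a₂ > a₃) (ha₃ : a₃ > 0) (hγ : 0 < γ)
    (A B : ℝ) (hA : A = Real.sqrt (a₂ / 2) * Real.sqrt γ)
    (hB : B = Real.sqrt (a₃ / 2) * Real.sqrt γ)
    (W : Ω → ℝ) (hWm : Measurable W) (hW : μ.map W = gaussianReal 0 (1 / 2))
    (ζ₁ ζ₄ ζ₅ : ℝ)
    (hζ₁ : ζ₁ = (Real.sqrt a₂ - Real.sqrt a₃) ^ 2)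
    (hζ₄ : ζ₄ = (2 * Real.sqrt a₂ - Real.sqrt a₃) ^ 2)
    (hζ₅ : ζ₅ = (2 * Real.sqrt a₂ + Real.sqrt a₃) ^ 2) :
    1 / 2 * ((μ {ω | W ω < -(2 * A + B)}).toReal
        + (μ {ω | -(2 * A - B) ≤ W ω ∧ W ω < -(A - B)}).toReal)
      = 1 / 2 * (gaussQ (Real.sqrt (ζ₁ * γ)) - gaussQ (Real.sqrt (ζ₄ * γ))
          + gaussQ (Real.sqrt (ζ₅ * γ))) :=
  stmt3_general μ a₂ a₃ γ ha A B hA hB W hW ζ₁ ζ₄ ζ₅ hζ₁ hζ₄ hζ₅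
end

section
/- Let a₂ > a₃ > 0, let N_r ≥ 1 be an integer, and let ḡ > 0. Set ζ₁ = (√a₂ − √a₃)², ζ₂ = (√a₂ + √a₃)², ζ₃ = a₃, ζ₄ = (2√a₂ − √a₃)², ζ₅ = (2√a₂ + √a₃)². Then ∫₀^∞ (1/2)·[ 2Q(√(ζ₃ γ)) + Q(√(ζ₁ γ)) − Q(√(ζ₂ γ)) − Q(√(ζ₄ γ)) + Q(√(ζ₅ γ)) ] · γ^{N_r−1} e^{−γ/ḡ} / ((N_r−1)! ḡ^{N_r}) dγ = Σ_{c=1}^{5} ( A_c · (−1)^{c+1} / 2 ) · ((1−μ_c)/2)^{N_r} · Σ_{λ=0}^{N_r−1} C(N_r−1+λ, λ) · ((1+μ_c)/2)^{λ}, where A_c = 2 if c = 3 and A_c = 1 otherwise, and μ_c = √( ζ_c ḡ / (2 + ζ_c ḡ) ). (Average bit error probability of user U₃ in three-user SSK-NOMA with QPSK over Rayleigh fading with MRC, Eqs. (27)–(28).) -/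
open MeasureTheory Real Finset

/-!
Substituting `γ = t²` turns `∫ Q(√(bγ)) γ^m e^{-γ/ḡ} dγ` into `2 ∫ Q(√b t) t^{2m+1} e^{-t²/ḡ} dt`.
Integrating `Q(s t) t^n e^{-a t²}` by parts, the derivative of `Q` produces Gaussian moments
`∫ t^{2k} e^{-α t²} = √(π/α)/2 · (2k)!/(k! (4α)^k)`, so the Gamma average of one Q-term is
`1/2 − μ/2 Σ_{k ≤ m} C(2k,k) ((1 − μ²)/4)^k` with `μ = √(bḡ/(2 + bḡ))`.  The expression
`((1 − μ)/2)^n Σ_l C(n − 1 + l, l) ((1 + μ)/2)^l` obeys the same recursion in `n` by Pascal's rule,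
and the theorem is the linear combination of the five Q-terms.
-/

open Set Filter Topology

lemma exp_neg_sq_div_two (t : ℝ) : exp (-t ^ 2 / 2) = exp (-(1 / 2) * t ^ 2) := by
  ring_nf

lemma integrable_exp_neg_sq_div_two : Integrable fun t : ℝ => exp (-t ^ 2 / 2) := by
  simpa only [exp_neg_sq_div_two] using integrable_exp_neg_mul_sq (by norm_num : (0 : ℝ) < 1 / 2)

lemma gaussQ_eq_sub_intervalIntegral (x : ℝ) :
    gaussQ x = (√(2 * π))⁻¹ *
      ((∫ t in Ioi 0, exp (-t ^ 2 / 2)) - ∫ t in (0 : ℝ)..x, exp (-t ^ 2 / 2)) := by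
  rw [← intervalIntegral.integral_Ioi_sub_Ioi' integrable_exp_neg_sq_div_two.integrableOn
    integrable_exp_neg_sq_div_two.integrableOn, sub_sub_cancel, gaussQ]

lemma hasDerivAt_gaussQ (x : ℝ) :
    HasDerivAt gaussQ (-((√(2 * π))⁻¹ * exp (-x ^ 2 / 2))) x := by
  have hK : Continuous fun t : ℝ => exp (-t ^ 2 / 2) := by fun_prop
  have hI := intervalIntegral.integral_hasDerivAt_right (a := 0) (b := x)
    integrable_exp_neg_sq_div_two.intervalIntegrable (hK.stronglyMeasurableAtFilter _ _)
    hK.continuousAt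
  rw [funext gaussQ_eq_sub_intervalIntegral, neg_mul_eq_mul_neg]
  exact (hI.const_sub _).const_mul _

@[fun_prop]
lemma continuous_gaussQ : Continuous gaussQ :=
  continuous_iff_continuousAt.2 fun x => (hasDerivAt_gaussQ x).continuousAt

lemma gaussQ_zero : gaussQ 0 = 1 / 2 := by
  have h2π : √(2 * π) ≠ 0 := by positivity
  rw [gaussQ]
  simp_rw [exp_neg_sq_div_two]
  rw [integral_gaussian_Ioi, div_div_eq_mul_div, div_one]
  field_simp

lemma gaussQ_nonneg (x : ℝ) : 0 ≤ gaussQ x :=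
  mul_nonneg (by positivity) (setIntegral_nonneg measurableSet_Ioi fun t _ => (exp_pos _).le)

lemma gaussQ_le_one (x : ℝ) : gaussQ x ≤ 1 := by
  have h2π : 0 < √(2 * π) := by positivity
  have hle : ∫ t in Ioi x, exp (-t ^ 2 / 2) ≤ √(2 * π) := by
    calc ∫ t in Ioi x, exp (-t ^ 2 / 2) ≤ ∫ t, exp (-t ^ 2 / 2) :=
          setIntegral_le_integral integrable_exp_neg_sq_div_two
            (Eventually.of_forall fun t => (exp_pos _).le)
      _ = √(2 * π) := by
          simp_rw [exp_neg_sq_div_two]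
          rw [integral_gaussian, div_div_eq_mul_div, div_one, mul_comm]
  rw [gaussQ, inv_mul_le_iff₀ h2π, mul_one]
  exact hle

lemma norm_gaussQ_le_one (x : ℝ) : ‖gaussQ x‖ ≤ 1 := by
  rw [Real.norm_of_nonneg (gaussQ_nonneg x)]
  exact gaussQ_le_one x

section GaussianWeight

variable {a : ℝ}

lemma integrableOn_pow_mul_exp_neg_mul_sq (ha : 0 < a) (n : ℕ) :
    IntegrableOn (fun t : ℝ => t ^ n * exp (-a * t ^ 2)) (Ioi 0) :=
  (integrableOn_rpow_mul_exp_neg_mul_sq ha (neg_one_lt_zero.trans_le n.cast_nonneg)).congr_fun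
    (fun t _ => by simp only [rpow_natCast]) measurableSet_Ioi

lemma tendsto_pow_mul_exp_neg_mul_sq (ha : 0 < a) (n : ℕ) :
    Tendsto (fun t : ℝ => t ^ n * exp (-a * t ^ 2)) atTop (𝓝 0) := by
  refine ((tendsto_rpow_abs_mul_exp_neg_mul_sq_cocompact ha n).mono_left
    atTop_le_cocompact).congr' ?_
  filter_upwards [eventually_ge_atTop 0] with t ht
  rw [abs_of_nonneg ht, rpow_natCast]

lemma integrableOn_gaussQ_mul_pow_mul_exp (ha : 0 < a) (s : ℝ) (n : ℕ) :
    IntegrableOn (fun t : ℝ => gaussQ (s * t) * (t ^ n * exp (-a * t ^ 2))) (Ioi 0) :=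
  (integrableOn_pow_mul_exp_neg_mul_sq ha n).bdd_mul (by fun_prop)
    (Eventually.of_forall fun t => norm_gaussQ_le_one (s * t))

lemma hasDerivAt_gaussQ_mul_pow_mul_exp (s : ℝ) (n : ℕ) (t : ℝ) :
    HasDerivAt (fun t : ℝ => gaussQ (s * t) * (t ^ n * exp (-a * t ^ 2)))
      (n * (gaussQ (s * t) * (t ^ (n - 1) * exp (-a * t ^ 2)))
        - 2 * a * (gaussQ (s * t) * (t ^ (n + 1) * exp (-a * t ^ 2)))
        - s / √(2 * π) * (t ^ n * exp (-(a + s ^ 2 / 2) * t ^ 2))) t := by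
  have hQ := (hasDerivAt_gaussQ (s * t)).comp t ((hasDerivAt_id t).const_mul s)
  have hw := (hasDerivAt_pow n t).mul (((hasDerivAt_pow 2 t).const_mul (-a)).exp)
  refine (hQ.mul hw).congr_deriv ?_
  rw [show -(a + s ^ 2 / 2) * t ^ 2 = -(s * t) ^ 2 / 2 + -a * t ^ 2 by ring, exp_add]
  simp only [Function.comp_apply, Pi.mul_apply, Nat.cast_ofNat, pow_succ]
  ring

/-- For `n = 0` the first term vanishes and the boundary term `gaussQ 0 = 1 / 2` appears. -/
theorem integral_gaussQ_mul_pow_succ_mul_exp (ha : 0 < a) (s : ℝ) (n : ℕ) :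
    2 * a * ∫ t in Ioi 0, gaussQ (s * t) * (t ^ (n + 1) * exp (-a * t ^ 2))
      = n * (∫ t in Ioi 0, gaussQ (s * t) * (t ^ (n - 1) * exp (-a * t ^ 2))) + 0 ^ n / 2
        - s / √(2 * π) * ∫ t in Ioi 0, t ^ n * exp (-(a + s ^ 2 / 2) * t ^ 2) := by
  have hα : 0 < a + s ^ 2 / 2 := by positivity
  have hint := integrableOn_gaussQ_mul_pow_mul_exp ha s
  have hlim : Tendsto (fun t : ℝ => gaussQ (s * t) * (t ^ n * exp (-a * t ^ 2))) atTop (𝓝 0) :=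
    squeeze_zero_norm
      (fun t => (norm_mul_le _ _).trans (mul_le_of_le_one_left (norm_nonneg _)
        (norm_gaussQ_le_one (s * t))))
      (by simpa using (tendsto_pow_mul_exp_neg_mul_sq ha n).norm)
  have h₁ := (hint (n - 1)).const_mul (n : ℝ)
  have h₂ := (hint (n + 1)).const_mul (2 * a)
  have h₃ := (integrableOn_pow_mul_exp_neg_mul_sq hα n).const_mul (s / √(2 * π))
  have hparts := integral_Ioi_of_hasDerivAt_of_tendsto'
    (fun t _ => hasDerivAt_gaussQ_mul_pow_mul_exp s n t) ((h₁.sub h₂).sub h₃) hlim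
  rw [integral_sub, integral_sub, integral_const_mul, integral_const_mul, integral_const_mul]
    at hparts
  · simp only [mul_zero, gaussQ_zero, zero_pow two_ne_zero, exp_zero, mul_one] at hparts
    linear_combination -hparts
  exacts [h₁, h₂, h₁.sub h₂, h₃]

/-- The case `s = 0` of `integral_gaussQ_mul_pow_succ_mul_exp`. -/
lemma integral_pow_add_two_mul_exp (ha : 0 < a) (n : ℕ) :
    2 * a * ∫ t in Ioi 0, t ^ (n + 2) * exp (-a * t ^ 2)
      = (n + 1) * ∫ t in Ioi 0, t ^ n * exp (-a * t ^ 2) := by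
  have h := integral_gaussQ_mul_pow_succ_mul_exp ha 0 (n + 1)
  simp only [zero_mul, gaussQ_zero, integral_const_mul, zero_div, sub_zero, add_tsub_cancel_right,
    Nat.cast_succ, zero_pow n.succ_ne_zero, add_zero] at h
  linear_combination 2 * h

theorem integral_pow_two_mul_mul_exp (ha : 0 < a) (k : ℕ) :
    ∫ t in Ioi 0, t ^ (2 * k) * exp (-a * t ^ 2)
      = √(π / a) / 2 * (2 * k).factorial / (k.factorial * (4 * a) ^ k) := by
  induction k with
  | zero => simpa using integral_gaussian_Ioi a
  | succ k ih =>
    have h := integral_pow_add_two_mul_exp ha (2 * k)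
    rw [ih, show 2 * k + 2 = 2 * (k + 1) by ring] at h
    have hG : ∫ t in Ioi 0, t ^ (2 * (k + 1)) * exp (-a * t ^ 2) = (2 * k + 1) / (2 * a)
        * (√(π / a) / 2 * (2 * k).factorial / (k.factorial * (4 * a) ^ k)) := by
      push_cast at h
      rw [div_mul_eq_mul_div, eq_div_iff (by positivity), mul_comm, h]
    rw [hG, show 2 * (k + 1) = 2 * k + 1 + 1 by ring, Nat.factorial_succ, Nat.factorial_succ,
      Nat.factorial_succ k]
    push_cast
    field_simp
    ring

end GaussianWeight

noncomputable def centralBinomSum (μ : ℝ) (m : ℕ) : ℝ :=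
  1 / 2 - μ / 2 * ∑ k ∈ range (m + 1), (k.centralBinom : ℝ) * ((1 - μ ^ 2) / 4) ^ k

lemma Nat.centralBinom_succ_eq_two_mul_choose (k : ℕ) :
    (k + 1).centralBinom = 2 * (k + (k + 1)).choose (k + 1) := by
  rw [Nat.centralBinom_eq_two_mul_choose, show 2 * (k + 1) = k + (k + 1) + 1 by ring,
    Nat.choose_succ_succ', Nat.choose_symm_add, two_mul]

lemma one_sub_mul_sum_choose_mul_pow {R : Type*} [CommRing R] (y : R) (k : ℕ) :
    (1 - y) * ∑ l ∈ range (k + 2), ((k + 1 + l).choose l : R) * y ^ l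
      = ∑ l ∈ range (k + 1), ((k + l).choose l : R) * y ^ l
        + (((k + (k + 1)).choose (k + 1) : R) - (k + 1).centralBinom * y) * y ^ (k + 1) := by
  have hLast : ∑ l ∈ range (k + 2), ((k + 1 + l).choose l : R) * y ^ l
      = ∑ l ∈ range (k + 1), ((k + 1 + l).choose l : R) * y ^ l
        + (k + 1).centralBinom * y ^ (k + 1) := by
    rw [sum_range_succ, Nat.centralBinom_eq_two_mul_choose, two_mul]
  have hPascal : ∑ l ∈ range (k + 2), ((k + 1 + l).choose l : R) * y ^ l
      = ∑ l ∈ range (k + 1), (y * (((k + 1 + l).choose l : R) * y ^ l)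
          + ((k + (l + 1)).choose (l + 1) : R) * y ^ (l + 1)) + 1 := by
    rw [sum_range_succ' (fun l => ((k + 1 + l).choose l : R) * y ^ l)]
    simp only [Nat.choose_zero_right, Nat.cast_one, pow_zero, mul_one]
    congr 1
    refine sum_congr rfl fun l _ => ?_
    rw [show k + 1 + (l + 1) = k + 1 + l + 1 by ring, Nat.choose_succ_succ',
      show k + 1 + l = k + (l + 1) by ring]
    push_cast
    ring
  rw [sum_add_distrib, ← mul_sum] at hPascal
  have hShift : ∑ l ∈ range (k + 1), ((k + (l + 1)).choose (l + 1) : R) * y ^ (l + 1)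
      = ∑ l ∈ range (k + 1), ((k + l).choose l : R) * y ^ l
        + (k + (k + 1)).choose (k + 1) * y ^ (k + 1) - 1 := by
    rw [← sum_range_succ (fun l => ((k + l).choose l : R) * y ^ l),
      sum_range_succ' (fun l => ((k + l).choose l : R) * y ^ l)]
    simp only [add_zero, Nat.choose_zero_right, Nat.cast_one, pow_zero, mul_one,
      add_sub_cancel_right]
  linear_combination hPascal - y * hLast + hShift

theorem pow_mul_sum_choose_mul_pow_eq_centralBinomSum (μ : ℝ) (m : ℕ) :
    ((1 - μ) / 2) ^ (m + 1) * ∑ l ∈ range (m + 1), ((m + l).choose l : ℝ) * ((1 + μ) / 2) ^ l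
      = centralBinomSum μ m := by
  induction m with
  | zero =>
    simp only [zero_add, pow_one, range_one, Nat.choose_self, Nat.cast_one, one_mul,
      sum_singleton, pow_zero, mul_one, centralBinomSum, Nat.centralBinom_zero]
    ring
  | succ m ih =>
    have h := one_sub_mul_sum_choose_mul_pow ((1 + μ) / 2) m
    rw [show 1 - (1 + μ) / 2 = (1 - μ) / 2 by ring] at h
    have hStep : centralBinomSum μ (m + 1)
        = centralBinomSum μ m - μ / 2 * (m + 1).centralBinom * ((1 - μ ^ 2) / 4) ^ (m + 1) := by
      simp only [centralBinomSum, sum_range_succ]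
      ring
    rw [hStep, ← ih, Nat.centralBinom_succ_eq_two_mul_choose,
      show (1 - μ ^ 2) / 4 = (1 - μ) / 2 * ((1 + μ) / 2) by ring, mul_pow]
    rw [Nat.centralBinom_succ_eq_two_mul_choose] at h
    push_cast at h ⊢
    linear_combination ((1 - μ) / 2) ^ (m + 1) * h

section GammaAverage

variable {b g : ℝ}

lemma rpow_two_smul_gaussQ_sqrt_mul (hb : 0 ≤ b) (m : ℕ) {t : ℝ} (ht : 0 < t) :
    (|(2 : ℝ)| * t ^ ((2 : ℝ) - 1)) •
        (gaussQ √(b * t ^ (2 : ℝ)) * (t ^ (2 : ℝ)) ^ m * exp (-t ^ (2 : ℝ) / g))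
      = 2 * (gaussQ (√b * t) * (t ^ (2 * m + 1) * exp (-(1 / g) * t ^ 2))) := by
  rw [rpow_two, sqrt_mul hb, sqrt_sq ht.le, smul_eq_mul, show (2 : ℝ) - 1 = 1 by norm_num,
    rpow_one, abs_two]
  ring_nf

lemma integrableOn_gaussQ_sqrt_mul_pow_mul_exp (hb : 0 ≤ b) (hg : 0 < g) (m : ℕ) :
    IntegrableOn (fun γ => gaussQ √(b * γ) * γ ^ m * exp (-γ / g)) (Ioi 0) := by
  rw [← integrableOn_Ioi_comp_rpow_iff _ two_ne_zero]
  exact IntegrableOn.congr_fun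
    ((integrableOn_gaussQ_mul_pow_mul_exp (one_div_pos.2 hg) √b (2 * m + 1)).const_mul 2)
    (fun t ht => (rpow_two_smul_gaussQ_sqrt_mul hb m ht).symm) measurableSet_Ioi

lemma integral_gaussQ_sqrt_mul_pow_mul_exp_eq (hb : 0 ≤ b) (m : ℕ) :
    ∫ γ in Ioi 0, gaussQ √(b * γ) * γ ^ m * exp (-γ / g)
      = 2 * ∫ t in Ioi 0, gaussQ (√b * t) * (t ^ (2 * m + 1) * exp (-(1 / g) * t ^ 2)) := by
  rw [← integral_comp_rpow_Ioi _ two_ne_zero, ← integral_const_mul]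
  exact setIntegral_congr_fun measurableSet_Ioi fun t ht => rpow_two_smul_gaussQ_sqrt_mul hb m ht

lemma sqrt_div_mul_integral_pow_two_mul_mul_exp (hb : 0 ≤ b) (hg : 0 < g) (k : ℕ) :
    √b / √(2 * π) * ∫ t in Ioi 0, t ^ (2 * k) * exp (-(1 / g + b / 2) * t ^ 2)
      = k.factorial * g ^ k * (√(b * g / (2 + b * g)) / 2 * k.centralBinom
          * ((1 - √(b * g / (2 + b * g)) ^ 2) / 4) ^ k) := by
  have hα : 0 < 1 / g + b / 2 := by positivity
  have hμ : √b / √(2 * π) * √(π / (1 / g + b / 2)) = √(b * g / (2 + b * g)) := by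
    rw [← sqrt_div hb, ← sqrt_mul (by positivity)]
    congr 1
    field_simp
  have h4α : 4 * (1 / g + b / 2) = 2 * (2 + b * g) / g := by
    field_simp
    ring
  have hq : (1 - √(b * g / (2 + b * g)) ^ 2) / 4 = 1 / (2 * (2 + b * g)) := by
    rw [sq_sqrt (by positivity)]
    field_simp
    ring
  have hC : (k.centralBinom : ℝ) * k.factorial * k.factorial = (2 * k).factorial := by
    exact_mod_cast two_mul k ▸ Nat.add_choose_mul_factorial_mul_factorial k k
  rw [integral_pow_two_mul_mul_exp hα, h4α, hq, ← hμ, ← hC, div_pow, one_div_pow]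
  field_simp

theorem integral_gaussQ_sqrt_mul_pow_mul_exp (hb : 0 ≤ b) (hg : 0 < g) (m : ℕ) :
    ∫ γ in Ioi 0, gaussQ √(b * γ) * γ ^ m * exp (-γ / g)
      = m.factorial * g ^ (m + 1) * centralBinomSum √(b * g / (2 + b * g)) m := by
  have hparts := integral_gaussQ_mul_pow_succ_mul_exp (one_div_pos.2 hg) √b
  simp only [sq_sqrt hb] at hparts
  have hgg : g * (1 / g) = 1 := mul_one_div_cancel hg.ne'
  rw [integral_gaussQ_sqrt_mul_pow_mul_exp_eq hb m]
  induction m with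
  | zero =>
    have h := hparts 0
    rw [sqrt_div_mul_integral_pow_two_mul_mul_exp hb hg 0] at h
    simp only [centralBinomSum]
    generalize ∫ t in Ioi 0, gaussQ (√b * t) * (t ^ (0 + 1) * exp (-(1 / g) * t ^ 2)) = P at h ⊢
    simp only [CharP.cast_eq_zero, zero_mul, zero_add, pow_zero, Nat.factorial_zero, Nat.cast_one,
      one_mul, pow_one, Nat.centralBinom_zero, range_one, sum_singleton, mul_one] at h ⊢
    linear_combination g * h - 2 * P * hgg
  | succ m ih =>
    have h := hparts (2 * m + 2)
    rw [show 2 * m + 2 - 1 = 2 * m + 1 by omega, show 2 * m + 2 + 1 = 2 * (m + 1) + 1 by ring,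
      show 2 * m + 2 = 2 * (m + 1) by ring, zero_pow (by omega),
      sqrt_div_mul_integral_pow_two_mul_mul_exp hb hg (m + 1)] at h
    rw [centralBinomSum, sum_range_succ]
    rw [centralBinomSum] at ih
    generalize ∫ t in Ioi 0, gaussQ (√b * t) * (t ^ (2 * (m + 1) + 1) * exp (-(1 / g) * t ^ 2)) = P
      at h ⊢
    generalize ∫ t in Ioi 0, gaussQ (√b * t) * (t ^ (2 * m + 1) * exp (-(1 / g) * t ^ 2)) = P₀
      at h ih
    push_cast [Nat.factorial_succ] at h ⊢
    linear_combination g * h + g * (m + 1) * ih - 2 * P * hgg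

theorem integral_gaussQ_sqrt_mul_mul_gammaPDF (hb : 0 ≤ b) (hg : 0 < g) {n : ℕ} (hn : 1 ≤ n) :
    ∫ γ in Ioi 0, gaussQ √(b * γ) * γ ^ (n - 1) * exp (-γ / g) / ((n - 1).factorial * g ^ n)
      = ((1 - √(b * g / (2 + b * g))) / 2) ^ n
          * ∑ l ∈ range n, ((n - 1 + l).choose l : ℝ) * ((1 + √(b * g / (2 + b * g))) / 2) ^ l := by
  obtain ⟨m, rfl⟩ : ∃ m, n = m + 1 := ⟨n - 1, by omega⟩
  rw [Nat.add_sub_cancel, integral_div, integral_gaussQ_sqrt_mul_pow_mul_exp hb hg,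
    pow_mul_sum_choose_mul_pow_eq_centralBinomSum]
  field_simp

end GammaAverage

theorem stmt4_general (a₂ a₃ : ℝ) (ha₃ : a₃ > 0)
    (Nr : ℕ) (hNr : 1 ≤ Nr) (gbar : ℝ) (hg : 0 < gbar)
    (ζ : ℕ → ℝ)
    (hζ₁ : ζ 1 = (Real.sqrt a₂ - Real.sqrt a₃) ^ 2)
    (hζ₂ : ζ 2 = (Real.sqrt a₂ + Real.sqrt a₃) ^ 2)
    (hζ₃ : ζ 3 = a₃)
    (hζ₄ : ζ 4 = (2 * Real.sqrt a₂ - Real.sqrt a₃) ^ 2)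
    (hζ₅ : ζ 5 = (2 * Real.sqrt a₂ + Real.sqrt a₃) ^ 2)
    (μ : ℕ → ℝ) (hμ : ∀ c, μ c = Real.sqrt (ζ c * gbar / (2 + ζ c * gbar)))
    (A : ℕ → ℝ) (hA : ∀ c, A c = if c = 3 then 2 else 1) :
    ∫ γ in Set.Ioi (0 : ℝ),
        (1 / 2 * (2 * gaussQ (Real.sqrt (ζ 3 * γ)) + gaussQ (Real.sqrt (ζ 1 * γ))
            - gaussQ (Real.sqrt (ζ 2 * γ)) - gaussQ (Real.sqrt (ζ 4 * γ))
            + gaussQ (Real.sqrt (ζ 5 * γ)))) *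
          γ ^ (Nr - 1) * Real.exp (-γ / gbar) / ((Nat.factorial (Nr - 1) : ℝ) * gbar ^ Nr)
      = ∑ c ∈ Finset.Icc 1 5, A c * (-1 : ℝ) ^ (c + 1) / 2 * ((1 - μ c) / 2) ^ Nr *
          ∑ l ∈ Finset.range Nr, (Nat.choose (Nr - 1 + l) l : ℝ) * ((1 + μ c) / 2) ^ l := by
  have hζ : ∀ c ∈ Finset.Icc 1 5, 0 ≤ ζ c := by
    intro c hc
    obtain ⟨h1, h5⟩ := Finset.mem_Icc.1 hc
    interval_cases c <;> simp only [hζ₁, hζ₂, hζ₃, hζ₄, hζ₅] <;> positivity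
  set ρ : ℕ → ℝ → ℝ := fun c γ =>
    gaussQ √(ζ c * γ) * γ ^ (Nr - 1) * exp (-γ / gbar) / ((Nr - 1).factorial * gbar ^ Nr)
  have hρ : ∀ c ∈ Finset.Icc 1 5, IntegrableOn (ρ c) (Ioi 0) := fun c hc =>
    (integrableOn_gaussQ_sqrt_mul_pow_mul_exp (hζ c hc) hg (Nr - 1)).div_const _
  calc _ = ∫ γ in Ioi 0, ∑ c ∈ Finset.Icc 1 5, A c * (-1 : ℝ) ^ (c + 1) / 2 * ρ c γ := by
        refine setIntegral_congr_fun measurableSet_Ioi fun γ _ => ?_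
        norm_num [sum_Icc_succ_top, ρ, hA]
        ring
    _ = _ := by
        rw [integral_finsetSum _ fun c hc => (hρ c hc).const_mul _]
        refine sum_congr rfl fun c hc => ?_
        rw [integral_const_mul, integral_gaussQ_sqrt_mul_mul_gammaPDF (hζ c hc) hg hNr, hμ c,
          mul_assoc]

/-- Average bit error probability of user U₃ in three-user SSK-NOMA with QPSK over Rayleigh
fading with MRC (Eqs. (27)–(28)): averaging the conditional BEP
`(1/2)[2Q(√(ζ₃γ)) + Q(√(ζ₁γ)) − Q(√(ζ₂γ)) − Q(√(ζ₄γ)) + Q(√(ζ₅γ))]`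
against the Gamma(N_r, ḡ) density gives
`∑_{c=1}^{5} (A_c (−1)^{c+1} / 2) ((1−μ_c)/2)^{N_r} ∑_{λ=0}^{N_r−1} C(N_r−1+λ, λ) ((1+μ_c)/2)^λ`,
where `A_c = 2` if `c = 3` and `A_c = 1` otherwise. Here the index `c ∈ {1,…,5}` is
modelled by `Finset.Icc 1 5`. -/
theorem stmt4 (a₂ a₃ : ℝ) (ha : a₂ > a₃) (ha₃ : a₃ > 0)
    (Nr : ℕ) (hNr : 1 ≤ Nr) (gbar : ℝ) (hg : 0 < gbar)
    (ζ : ℕ → ℝ)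
    (hζ₁ : ζ 1 = (Real.sqrt a₂ - Real.sqrt a₃) ^ 2)
    (hζ₂ : ζ 2 = (Real.sqrt a₂ + Real.sqrt a₃) ^ 2)
    (hζ₃ : ζ 3 = a₃)
    (hζ₄ : ζ 4 = (2 * Real.sqrt a₂ - Real.sqrt a₃) ^ 2)
    (hζ₅ : ζ 5 = (2 * Real.sqrt a₂ + Real.sqrt a₃) ^ 2)
    (μ : ℕ → ℝ) (hμ : ∀ c, μ c = Real.sqrt (ζ c * gbar / (2 + ζ c * gbar)))
    (A : ℕ → ℝ) (hA : ∀ c, A c = if c = 3 then 2 else 1) :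
    ∫ γ in Set.Ioi (0 : ℝ),
        (1 / 2 * (2 * gaussQ (Real.sqrt (ζ 3 * γ)) + gaussQ (Real.sqrt (ζ 1 * γ))
            - gaussQ (Real.sqrt (ζ 2 * γ)) - gaussQ (Real.sqrt (ζ 4 * γ))
            + gaussQ (Real.sqrt (ζ 5 * γ)))) *
          γ ^ (Nr - 1) * Real.exp (-γ / gbar) / ((Nat.factorial (Nr - 1) : ℝ) * gbar ^ Nr)
      = ∑ c ∈ Finset.Icc 1 5, A c * (-1 : ℝ) ^ (c + 1) / 2 * ((1 - μ c) / 2) ^ Nr *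
          ∑ l ∈ Finset.range Nr, (Nat.choose (Nr - 1 + l) l : ℝ) * ((1 + μ c) / 2) ^ l :=
  stmt4_general a₂ a₃ ha₃ Nr hNr gbar hg ζ hζ₁ hζ₂ hζ₃ hζ₄ hζ₅ μ hμ A hA
end

section
/- Let N ≥ 1 be an integer and η > 0. Then ∫₀^∞ log₂(1 + η γ) · γ^{N−1} e^{−γ} / (N−1)! dγ = (log₂ e / (N−1)!) · Σ_{λ=0}^{N−1} ((N−1)!/(N−1−λ)!) · [ (−1)^{N−λ−2} · η^{−(N−1−λ)} · e^{1/η} · Ei(−1/η) + Σ_{ς=1}^{N−1−λ} (ς−1)! · (−η)^{−(N−1−λ−ς)} ], where Ei(−x) = −∫_x^∞ e^{−t}/t dt for x > 0. (The closed-form evaluation of the ergodic-rate integral over a Gamma-distributed SNR, the core of Eq. (40).) -/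
open MeasureTheory Real Finset

/-- `negEi x` is the exponential integral `Ei(−x) = −∫_x^∞ e^{−t}/t dt` (for `x > 0`). -/
noncomputable def negEi (x : ℝ) : ℝ := -∫ t in Set.Ioi x, Real.exp (-t) / t

/-!
Put `b = 1/η`, `I_m = ∫₀^∞ x^m e^{-x} / (x + b) dx` and
`J_n = ∫₀^∞ log (1 + η x) x^n e^{-x} dx`.
Integrating `J_n` by parts against `e^{-x}` gives `J_n = I_n + n J_{n-1}`, since
`d/dx log (1 + η x) = 1 / (x + b)`; hence `J_n = ∑_{l ≤ n} n!/l! I_l`. Writing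
`x^{m+1} / (x + b) = x^m - b x^m / (x + b)` gives `I_{m+1} = m! - b I_m`, and the shift
`x ↦ x + b` gives `I_0 = -e^b Ei(-b)`; unrolling yields `I_m` in closed form, and reindexing
`l ↦ N - 1 - l` gives the stated sum.
-/

open Set Filter Topology
open scoped Nat

lemma setIntegral_Ioi_zero_comp_add_right (g : ℝ → ℝ) (b : ℝ) :
    ∫ x in Ioi 0, g (x + b) = ∫ x in Ioi b, g x := by
  have := (measurePreserving_add_right volume b).setIntegral_preimage_emb
    (measurableEmbedding_addRight b) g (Ioi b)
  rwa [preimage_add_const_Ioi, sub_self] at this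

lemma integrableOn_pow_mul_exp_neg (m : ℕ) :
    IntegrableOn (fun x : ℝ => x ^ m * exp (-x)) (Ioi 0) := by
  refine (GammaIntegral_convergent (s := m + 1) (by positivity)).congr_fun (fun x _ => ?_)
    measurableSet_Ioi
  simp only [add_sub_cancel_right, rpow_natCast, mul_comm]

lemma integral_pow_mul_exp_neg (m : ℕ) : ∫ x in Ioi (0 : ℝ), x ^ m * exp (-x) = m ! := by
  rw [← Gamma_nat_eq_factorial, Gamma_eq_integral (by positivity)]
  refine setIntegral_congr_fun measurableSet_Ioi (fun x _ => ?_)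
  rw [add_sub_cancel_right, rpow_natCast, mul_comm]

noncomputable def stieltjesMoment (m : ℕ) (b : ℝ) : ℝ :=
  ∫ x in Ioi 0, x ^ m * exp (-x) / (x + b)

lemma integrableOn_pow_mul_exp_neg_div_add (m : ℕ) {b : ℝ} (hb : 0 < b) :
    IntegrableOn (fun x : ℝ => x ^ m * exp (-x) / (x + b)) (Ioi 0) := by
  refine ((integrableOn_pow_mul_exp_neg m).const_mul b⁻¹).mono'
    (Measurable.aestronglyMeasurable (by fun_prop)) ?_
  filter_upwards [ae_restrict_mem measurableSet_Ioi] with x (hx : 0 < x)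
  rw [norm_of_nonneg (by positivity), div_eq_mul_inv, mul_comm]
  gcongr
  linarith

lemma stieltjesMoment_zero (b : ℝ) : stieltjesMoment 0 b = -(exp b * negEi b) := by
  have h : ∀ x : ℝ, x ^ 0 * exp (-x) / (x + b) = exp b * (exp (-(x + b)) / (x + b)) := by
    intro x
    rw [pow_zero, one_mul, mul_div_assoc', ← exp_add]
    ring_nf
  simp only [stieltjesMoment, h, integral_const_mul,
    setIntegral_Ioi_zero_comp_add_right (fun t => exp (-t) / t), negEi, mul_neg, neg_neg]

lemma stieltjesMoment_succ (m : ℕ) {b : ℝ} (hb : 0 < b) :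
    stieltjesMoment (m + 1) b = (m ! : ℝ) - b * stieltjesMoment m b := by
  have h : ∀ x ∈ Ioi (0 : ℝ), x ^ (m + 1) * exp (-x) / (x + b)
      = x ^ m * exp (-x) - b * (x ^ m * exp (-x) / (x + b)) := by
    intro x (hx : 0 < x)
    field_simp
    ring
  rw [stieltjesMoment, setIntegral_congr_fun measurableSet_Ioi h,
    integral_sub (integrableOn_pow_mul_exp_neg m)
      ((integrableOn_pow_mul_exp_neg_div_add m hb).const_mul b),
    integral_const_mul, integral_pow_mul_exp_neg, stieltjesMoment]

lemma stieltjesMoment_eq (m : ℕ) {b : ℝ} (hb : 0 < b) :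
    stieltjesMoment m b = -((-b) ^ m * exp b * negEi b)
      + ∑ s ∈ Icc 1 m, ((s - 1) ! : ℝ) * (-b) ^ (m - s) := by
  induction m with
  | zero => simp [stieltjesMoment_zero]
  | succ m ih =>
    have hsum : ∑ s ∈ Icc 1 m, ((s - 1) ! : ℝ) * (-b) ^ (m + 1 - s)
        = -b * ∑ s ∈ Icc 1 m, ((s - 1) ! : ℝ) * (-b) ^ (m - s) := by
      rw [mul_sum]
      refine sum_congr rfl (fun s hs => ?_)
      rw [Nat.sub_add_comm (mem_Icc.1 hs).2, pow_succ]
      ring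
    rw [stieltjesMoment_succ m hb, ih, sum_Icc_succ_top (by omega), hsum,
      Nat.add_sub_cancel, Nat.sub_self, pow_zero, mul_one, pow_succ]
    ring

lemma norm_log_one_add_mul_mul_pow_mul_exp_neg_le (k : ℕ) {η x : ℝ} (hη : 0 ≤ η)
    (hx : 0 ≤ x) :
    ‖log (1 + η * x) * x ^ k * exp (-x)‖ ≤ η * (x ^ (k + 1) * exp (-x)) := by
  have hlog_nonneg : 0 ≤ log (1 + η * x) := log_nonneg (by nlinarith)
  have hlog_le : log (1 + η * x) ≤ η * x := by
    linarith [log_le_sub_one_of_pos (by nlinarith : 0 < 1 + η * x)]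
  rw [norm_of_nonneg (by positivity), pow_succ]
  calc log (1 + η * x) * x ^ k * exp (-x) ≤ η * x * x ^ k * exp (-x) := by gcongr
    _ = η * (x ^ k * x * exp (-x)) := by ring

lemma integrableOn_log_one_add_mul_mul_pow_mul_exp_neg (k : ℕ) {η : ℝ} (hη : 0 ≤ η) :
    IntegrableOn (fun x : ℝ => log (1 + η * x) * x ^ k * exp (-x)) (Ioi 0) := by
  refine ((integrableOn_pow_mul_exp_neg (k + 1)).const_mul η).mono'
    (Measurable.aestronglyMeasurable (by fun_prop)) ?_
  filter_upwards [ae_restrict_mem measurableSet_Ioi] with x (hx : 0 < x)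
  exact norm_log_one_add_mul_mul_pow_mul_exp_neg_le k hη hx.le

noncomputable def logMoment (η : ℝ) (n : ℕ) : ℝ :=
  ∫ x in Ioi 0, log (1 + η * x) * x ^ n * exp (-x)

lemma logMoment_eq (n : ℕ) {η : ℝ} (hη : 0 < η) :
    logMoment η n = stieltjesMoment n η⁻¹ + n * logMoment η (n - 1) := by
  set u : ℝ → ℝ := fun x => log (1 + η * x) * x ^ n
  set u' : ℝ → ℝ := fun x => η / (1 + η * x) * x ^ n + log (1 + η * x) * (n * x ^ (n - 1))
  have hu : ∀ x ∈ Ioi (0 : ℝ), HasDerivAt u (u' x) x := by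
    intro x (hx : 0 < x)
    have hlin : HasDerivAt (fun y : ℝ => 1 + η * y) η x := by
      simpa using ((hasDerivAt_id x).const_mul η).const_add 1
    have hlog := hlin.log (by positivity)
    exact hlog.mul (hasDerivAt_pow n x)
  have hv : ∀ x ∈ Ioi (0 : ℝ), HasDerivAt (fun y => -exp (-y)) (exp (-x)) x := by
    intro x _
    simpa using ((hasDerivAt_neg x).exp).fun_neg
  have hu'v_eq : ∀ x ∈ Ioi (0 : ℝ), u' x * -exp (-x)
      = -(x ^ n * exp (-x) / (x + η⁻¹) + n * (log (1 + η * x) * x ^ (n - 1) * exp (-x))) := by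
    intro x (hx : 0 < x)
    simp only [u']
    field_simp
    ring
  have hint : IntegrableOn
      (fun x => x ^ n * exp (-x) / (x + η⁻¹) + n * (log (1 + η * x) * x ^ (n - 1) * exp (-x)))
      (Ioi 0) :=
    (integrableOn_pow_mul_exp_neg_div_add n (inv_pos.2 hη)).add
      ((integrableOn_log_one_add_mul_mul_pow_mul_exp_neg (n - 1) hη.le).const_mul _)
  have h_zero : Tendsto (u * fun y => -exp (-y)) (𝓝[>] 0) (𝓝 0) := by
    have : ContinuousAt (u * fun y => -exp (-y)) 0 := by
      simp only [u]; fun_prop (disch := norm_num)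
    simpa [u] using this.tendsto.mono_left nhdsWithin_le_nhds
  have h_infty : Tendsto (u * fun y => -exp (-y)) atTop (𝓝 0) := by
    refine squeeze_zero_norm' ?_ (by
      simpa using (tendsto_pow_mul_exp_neg_atTop_nhds_zero (n + 1)).const_mul η)
    filter_upwards [eventually_ge_atTop 0] with x hx
    simpa [u, mul_neg, norm_neg] using norm_log_one_add_mul_mul_pow_mul_exp_neg_le n hη.le hx
  have hibp := integral_Ioi_mul_deriv_eq_deriv_mul hu hv
    (integrableOn_log_one_add_mul_mul_pow_mul_exp_neg n hη.le)
    ((hint.neg).congr_fun (fun x hx => (hu'v_eq x hx).symm) measurableSet_Ioi) h_zero h_infty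
  rw [setIntegral_congr_fun measurableSet_Ioi hu'v_eq, integral_neg,
    integral_add (integrableOn_pow_mul_exp_neg_div_add n (inv_pos.2 hη))
      ((integrableOn_log_one_add_mul_mul_pow_mul_exp_neg (n - 1) hη.le).const_mul _),
    integral_const_mul] at hibp
  simpa [logMoment, stieltjesMoment] using hibp

lemma logMoment_eq_sum (n : ℕ) {η : ℝ} (hη : 0 < η) :
    logMoment η n = ∑ l ∈ range (n + 1), (n ! / l ! : ℝ) * stieltjesMoment l η⁻¹ := by
  induction n with
  | zero =>
    rw [logMoment_eq 0 hη]
    simp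
  | succ n ih =>
    rw [logMoment_eq (n + 1) hη, Nat.add_sub_cancel, ih, sum_range_succ _ (n + 1), mul_sum,
      div_self (by positivity), one_mul, add_comm]
    congr 1
    refine sum_congr rfl (fun l _ => ?_)
    rw [Nat.factorial_succ]
    push_cast
    ring

lemma stieltjesMoment_inv_eq (m : ℕ) {η : ℝ} (hη : 0 < η) :
    stieltjesMoment m η⁻¹
      = (-1 : ℝ) ^ ((m : ℤ) - 1) * η ^ (-(m : ℤ)) * exp (1 / η) * negEi (1 / η)
        + ∑ s ∈ Icc 1 m, ((s - 1) ! : ℝ) * (-η) ^ (-((m : ℤ) - s)) := by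
  rw [stieltjesMoment_eq m (inv_pos.2 hη), one_div]
  congr 1
  · rw [zpow_sub₀ (by norm_num), zpow_one, zpow_neg, zpow_natCast, zpow_natCast, neg_pow,
      inv_pow]
    ring
  · refine sum_congr rfl (fun s hs => ?_)
    rw [← Nat.cast_sub (mem_Icc.1 hs).2, zpow_neg, zpow_natCast, ← inv_pow, neg_inv]

/-- Closed-form evaluation of the ergodic-rate integral over a Gamma(N,1)-distributed SNR
(core of Eq. (40)):
`∫₀^∞ log₂(1 + ηγ) γ^{N−1} e^{−γ} / (N−1)! dγ
 = (log₂ e / (N−1)!) ∑_{λ=0}^{N−1} ((N−1)!/(N−1−λ)!)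
     [ (−1)^{N−λ−2} η^{−(N−1−λ)} e^{1/η} Ei(−1/η)
       + ∑_{ς=1}^{N−1−λ} (ς−1)! (−η)^{−(N−1−λ−ς)} ]`. -/
theorem stmt10 (N : ℕ) (hN : 1 ≤ N) (η : ℝ) (hη : 0 < η) :
    ∫ γ in Set.Ioi (0 : ℝ),
        Real.logb 2 (1 + η * γ) * γ ^ (N - 1) * Real.exp (-γ) / (Nat.factorial (N - 1) : ℝ)
      = Real.logb 2 (Real.exp 1) / (Nat.factorial (N - 1) : ℝ) *
          ∑ l ∈ Finset.range N,
            ((Nat.factorial (N - 1) : ℝ) / (Nat.factorial (N - 1 - l) : ℝ)) *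
              ((-1 : ℝ) ^ ((N : ℤ) - (l : ℤ) - 2) * η ^ (-((N : ℤ) - 1 - (l : ℤ))) *
                  Real.exp (1 / η) * negEi (1 / η)
                + ∑ s ∈ Finset.Icc 1 (N - 1 - l),
                    (Nat.factorial (s - 1) : ℝ) *
                      (-η) ^ (-((N : ℤ) - 1 - (l : ℤ) - (s : ℤ)))) := by
  obtain ⟨n, rfl⟩ : ∃ n, N = n + 1 := ⟨N - 1, by omega⟩
  have hbracket : ∀ l ∈ range (n + 1),
      (-1 : ℝ) ^ (((n + 1 : ℕ) : ℤ) - l - 2) * η ^ (-(((n + 1 : ℕ) : ℤ) - 1 - l)) *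
          exp (1 / η) * negEi (1 / η)
        + ∑ s ∈ Icc 1 (n - l),
            ((s - 1) ! : ℝ) * (-η) ^ (-(((n + 1 : ℕ) : ℤ) - 1 - l - s))
      = stieltjesMoment (n - l) η⁻¹ := by
    intro l hl
    have hl : l ≤ n := Nat.lt_succ_iff.1 (mem_range.1 hl)
    rw [stieltjesMoment_inv_eq _ hη,
      show ((n + 1 : ℕ) : ℤ) - l - 2 = ((n - l : ℕ) : ℤ) - 1 by omega,
      show ((n + 1 : ℕ) : ℤ) - 1 - l = ((n - l : ℕ) : ℤ) by omega]
  have hlhs : ∫ γ in Ioi (0 : ℝ), logb 2 (1 + η * γ) * γ ^ n * exp (-γ) / (n ! : ℝ)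
      = logMoment η n / (log 2 * n !) := by
    rw [logMoment, ← integral_div]
    refine setIntegral_congr_fun measurableSet_Ioi (fun x _ => ?_)
    simp only [logb]
    ring
  rw [Nat.add_sub_cancel, sum_congr rfl (fun l hl => by rw [hbracket l hl]), hlhs,
    logMoment_eq_sum n hη, ← sum_range_reflect, logb, log_exp, mul_sum, sum_div]
  refine sum_congr rfl (fun l _ => ?_)
  rw [Nat.add_sub_cancel]
  field_simp
end
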